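/- arXiv:1212.5951 — 7 statements merged into one kernel-verified Lean document; each statement's English description precedes it below -/
import Mathlib

section
/- Let 𝒜 = (S, Σ, A, 𝒯) be an unrestricted Rabin automaton. Then the set Sh_𝒜 of configurations accepted by 𝒜 is a sofic tree shift: there exist a finite alphabet C, a tree shift of finite type Y ⊆ C^{Σ*}, and a cellular automaton τ : Y → A^{Σ*} with τ(Y) = Sh_𝒜. -/
/-! Common definitions: configurations over the regular rooted tree `Σ*`
(words = `List Sg`), the shift action, tree shifts, blocks, shifts of finite
type, cellular automata, sofic tree shifts, unrestricted Rabin automata. -/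

/-- The shift action: `f^w (w') = f (w ++ w')`. -/
def shiftMap {Sg A : Type} (f : List Sg → A) (w : List Sg) : List Sg → A :=
  fun w' => f (w ++ w')

/-- The orbit `{f^w : w ∈ Σ*}` of a configuration under the shift action. -/
def shiftOrbit {Sg A : Type} (f : List Sg → A) : Set (List Sg → A) :=
  Set.range (shiftMap f)

/-- A configuration is regular if its orbit under the shift action is finite. -/
def IsRegularConfig {Sg A : Type} (f : List Sg → A) : Prop :=
  (shiftOrbit f).Finite

/-- A tree shift: a subset of `A^{Σ*}` that is closed in the prodiscrete
topology and invariant under the shift action. -/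
def IsTreeShift {Sg A : Type} [TopologicalSpace A] (X : Set (List Sg → A)) : Prop :=
  IsClosed X ∧ ∀ f ∈ X, ∀ w : List Sg, shiftMap f w ∈ X

/-- A block of size `n + 1`: a map `Δ_{n+1} → A`, where `Δ_k` is the set of
words of length `< k` (so blocks have size `≥ 1`). -/
def TreeBlock (Sg A : Type) : Type :=
  (n : ℕ) × ({w : List Sg // w.length < n + 1} → A)

/-- The restriction of `f^w` to `Δ_{n+1}`, viewed as a block. -/
def blockAt {Sg A : Type} (f : List Sg → A) (w : List Sg) (n : ℕ) : TreeBlock Sg A :=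
  ⟨n, fun m => f (w ++ m.val)⟩

/-- `X(F)`: the set of configurations avoiding every block in `F`. -/
def avoids {Sg A : Type} (F : Set (TreeBlock Sg A)) : Set (List Sg → A) :=
  {f | ∀ (w : List Sg) (n : ℕ), blockAt f w n ∉ F}

/-- A tree shift of finite type: `X = X(F)` for some finite set `F` of blocks. -/
def IsSFT {Sg A : Type} (X : Set (List Sg → A)) : Prop :=
  ∃ F : Set (TreeBlock Sg A), F.Finite ∧ X = avoids F

/-- A cellular automaton `τ : X → B^{Σ*}`: there are a finite memory set
`M ⊆ Σ*` and a local map `μ : A^M → B` with `τ(f)(w) = μ((f^w)|_M)`. -/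
def IsCellularAutomaton {Sg A B : Type} (X : Set (List Sg → A))
    (τ : X → List Sg → B) : Prop :=
  ∃ (M : Finset (List Sg)) (μ : ({m : List Sg // m ∈ M} → A) → B),
    ∀ (f : X) (w : List Sg), τ f w = μ (fun m => f.val (w ++ m.val))

/-- A sofic tree shift: the image of a tree shift of finite type under a
cellular automaton. -/
def IsSofic {Sg A : Type} (X : Set (List Sg → A)) : Prop :=
  ∃ (C : Type) (_ : Finite C) (Y : Set (List Sg → C)) (τ : Y → List Sg → A),
    IsSFT Y ∧ IsCellularAutomaton Y τ ∧ X = Set.range τ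

/-- An unrestricted Rabin automaton: a nonempty finite state set `S` and a set
of transition bundles `𝒯 ⊆ S × A × S^Σ`. -/
structure URA (Sg A : Type) where
  S : Type
  [finS : Finite S]
  [neS : Nonempty S]
  T : Set (S × A × (Sg → S))

attribute [instance] URA.finS URA.neS

/-- Acceptance of a configuration by an unrestricted Rabin automaton. -/
def URA.Accepts {Sg A : Type} (𝒜 : URA Sg A) (f : List Sg → A) : Prop :=
  ∃ α : List Sg → 𝒜.S,
    ∀ w : List Sg, (α w, f w, fun σ => α (w ++ [σ])) ∈ 𝒜.T

/-- `Sh_𝒜`: the set of configurations accepted by `𝒜`. -/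
def URA.shift {Sg A : Type} (𝒜 : URA Sg A) : Set (List Sg → A) :=
  {f | 𝒜.Accepts f}

/-- `𝒜` is essential if every state is the source of some transition bundle. -/
def URA.Essential {Sg A : Type} (𝒜 : URA Sg A) : Prop :=
  ∀ s : 𝒜.S, ∃ t ∈ 𝒜.T, t.1 = s

/-- `𝒜` is co-deterministic if for every terminal sequence and label there is
at most one transition bundle with that terminal sequence and label. -/
def URA.CoDeterministic {Sg A : Type} (𝒜 : URA Sg A) : Prop :=
  ∀ t ∈ 𝒜.T, ∀ t' ∈ 𝒜.T, t.2.1 = t'.2.1 → t.2.2 = t'.2.2 → t = t'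

/-- `𝒜` is co-complete if for every terminal sequence and label there is at
least one transition bundle with that terminal sequence and label. -/
def URA.CoComplete {Sg A : Type} (𝒜 : URA Sg A) : Prop :=
  ∀ (s : Sg → 𝒜.S) (a : A), ∃ t ∈ 𝒜.T, t.2.1 = a ∧ t.2.2 = s

/-- One step along a bundle path: some transition bundle has source `s` and
`σ`-terminal state `s'` for some `σ`. -/
def URA.Step {Sg A : Type} (𝒜 : URA Sg A) (s s' : 𝒜.S) : Prop :=
  ∃ t ∈ 𝒜.T, t.1 = s ∧ ∃ σ : Sg, t.2.2 σ = s'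

/-- `𝒜` is strongly connected if any state can be joined to any other by a
bundle path (possibly empty). -/
def URA.StronglyConnected {Sg A : Type} (𝒜 : URA Sg A) : Prop :=
  ∀ s s' : 𝒜.S, Relation.ReflTransGen 𝒜.Step s s'

/-- A tree shift `X` is irreducible if for all blocks `p ∈ X_n`, `q ∈ X_m`
there is `f ∈ X` with `f|_{Δ_n} = p` and, for every `w ∈ Σ^n`, some `v` with
`f|_{w v Δ_m} = w v · q`. -/
def IsIrreducibleShift {Sg A : Type} (X : Set (List Sg → A)) : Prop :=
  ∀ (n m : ℕ) (p q : List Sg → A),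
    (∃ fp ∈ X, ∀ u : List Sg, u.length < n → fp u = p u) →
    (∃ fq ∈ X, ∀ u : List Sg, u.length < m → fq u = q u) →
    ∃ f ∈ X, (∀ u : List Sg, u.length < n → f u = p u) ∧
      ∀ w : List Sg, w.length = n → ∃ v : List Sg,
        ∀ u : List Sg, u.length < m → f (w ++ v ++ u) = q u

/-- A subtree of `Σ*`: contains the root `ε` and is prefix-closed. -/
def IsSubtree {Sg : Type} (T : Set (List Sg)) : Prop :=
  ([] : List Sg) ∈ T ∧ ∀ u v : List Sg, u ++ v ∈ T → u ∈ T

/-- A full subtree: each vertex has either all of its children or none. -/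
def IsFullSubtree {Sg : Type} (T : Set (List Sg)) : Prop :=
  IsSubtree T ∧ ∀ w ∈ T, (∀ σ : Sg, w ++ [σ] ∈ T) ∨ (∀ σ : Sg, w ++ [σ] ∉ T)

/-- `T⁺ = T ∪ {wσ : w ∈ T, σ ∈ Σ}`. -/
def treePlus {Sg : Type} (T : Set (List Sg)) : Set (List Sg) :=
  T ∪ {x | ∃ w ∈ T, ∃ σ : Sg, x = w ++ [σ]}

/-- Acceptance of the full-tree-pattern `p : T → A` by the finite-tree
automaton `𝒜(I, F)` (initial states `I`, final state `F`). -/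
def FTAccepts {Sg A : Type} (𝒜 : URA Sg A) (I : Set 𝒜.S) (F : 𝒜.S)
    (T : Set (List Sg)) (p : List Sg → A) : Prop :=
  ∃ α : List Sg → 𝒜.S,
    (∀ w ∈ T, (α w, p w, fun σ => α (w ++ [σ])) ∈ 𝒜.T) ∧
    α [] ∈ I ∧
    ∀ w ∈ treePlus T, w ∉ T → α w = F

/-- A Rabin automaton: an unrestricted Rabin automaton together with a set of
initial states and a family of accepting sets. -/
structure RabinAutomaton (Sg A : Type) where
  toURA : URA Sg A
  I : Set toURA.S
  Acc : Set (Set toURA.S)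

/-- Acceptance by a Rabin automaton: a homomorphism realizing `f`, starting at
an initial state, and such that along every right-infinite word, the set of
states visited infinitely often belongs to the family of accepting sets. -/
def RabinAccepts {Sg A : Type} (𝒜 : RabinAutomaton Sg A) (f : List Sg → A) : Prop :=
  ∃ α : List Sg → 𝒜.toURA.S,
    (∀ w : List Sg, (α w, f w, fun σ => α (w ++ [σ])) ∈ 𝒜.toURA.T) ∧
    α [] ∈ 𝒜.I ∧
    ∀ ω : ℕ → Sg,
      {s : 𝒜.toURA.S | ∀ N : ℕ, ∃ n ≥ N, α ((List.range n).map ω) = s} ∈ 𝒜.Acc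

/-- the set `Sh_𝒜` of configurations accepted by an unrestricted
Rabin automaton is a sofic tree shift. -/
theorem shift_of_URA_isSofic {Sg A : Type} [Finite Sg] [Nonempty Sg] [Finite A]
    (𝒜 : URA Sg A) :
    IsSofic 𝒜.shift := by
  classical
  set C := 𝒜.S × A with hC
  have hfinsub : Finite {w : List Sg // w.length < 2} :=
    (List.finite_length_lt Sg 2).to_subtype
  set F : Set (TreeBlock Sg C) :=
    (fun b : ({w : List Sg // w.length < 2} → C) => (⟨1, b⟩ : TreeBlock Sg C)) ''
      {b | ((b ⟨[], by simp⟩).1, (b ⟨[], by simp⟩).2,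
        fun σ => (b ⟨[σ], by simp⟩).1) ∉ 𝒜.T} with hF
  have hFfin : F.Finite := Set.Finite.image _ (Set.toFinite _)
  set Y : Set (List Sg → C) := avoids F with hY
  have hmem : ∀ g : List Sg → C, g ∈ Y ↔
      ∀ w : List Sg, ((g w).1, (g w).2, fun σ => (g (w ++ [σ])).1) ∈ 𝒜.T := by
    intro g
    constructor
    · intro hg w
      by_contra hbad
      apply hg w 1
      refine ⟨fun m => g (w ++ m.val), ?_, rfl⟩
      simpa using hbad
    · intro hg w n
      rintro ⟨b, hb, heq⟩
      unfold blockAt at heq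
      obtain ⟨h1, h2⟩ := Sigma.mk.inj_iff.mp heq
      subst h1
      have h2' : b = fun m => g (w ++ m.val) := eq_of_heq h2
      subst h2'
      apply hb
      simpa using hg w
  refine ⟨C, inferInstance, Y, fun g w => (g.val w).2, ⟨F, hFfin, rfl⟩, ?_, ?_⟩
  · refine ⟨{[]}, fun h => (h ⟨[], by simp⟩).2, ?_⟩
    intro f w
    simp
  · ext f
    constructor
    · rintro ⟨α, hα⟩
      refine ⟨⟨fun w => (α w, f w), ?_⟩, rfl⟩
      exact (hmem _).mpr hα
    · rintro ⟨⟨g, hg⟩, rfl⟩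
      exact ⟨fun w => (g w).1, (hmem g).mp hg⟩
end

section
/- A tree shift X ⊆ A^{Σ*} is sofic if and only if there exists an unrestricted Rabin automaton 𝒜 such that X = Sh_𝒜. -/
/-! A run of `𝒜` on `f` is a configuration of transition bundles in which the terminal states of
each bundle are the sources of the bundles at the children; this is a local condition on
blocks of size 2, so the runs form a shift of finite type over the finite alphabet `𝒜.T`, and
reading off labels is a one-block cellular automaton. Conversely, a sofic shift `τ(X(F))`, with
every block of `F` and the memory of `τ` inside `Δ_{n+1}`, is recognised by the automaton whose
states are the blocks of size `n + 1`: a bundle checks the block at its source against `F`,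
carries the label computed by `τ`, and passes to each child `σ` the block shifted by `σ`. -/

instance {Sg : Type} [Finite Sg] (n : ℕ) : Finite {u : List Sg // u.length < n} :=
  (List.finite_length_lt Sg n).to_subtype

abbrev Window (Sg C : Type) (n : ℕ) : Type := {u : List Sg // u.length < n + 1} → C

def window {Sg C : Type} (g : List Sg → C) (w : List Sg) (n : ℕ) : Window Sg C n :=
  fun u => g (w ++ u.val)

theorem window_append_singleton {Sg C : Type} (g : List Sg → C) (w : List Sg) (σ : Sg)
    {n : ℕ} (u : List Sg) (hu : u.length < n) :
    window g (w ++ [σ]) n ⟨u, by omega⟩ = window g w n ⟨σ :: u, by simpa⟩ := by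
  simp [window]

/-- A family of windows in which each window at `w ++ [σ]` is the `σ`-shift of the window at `w`
is the family of windows of a single configuration. -/
theorem eq_window_of_shift_compatible {Sg C : Type} {n : ℕ} {α : List Sg → Window Sg C n}
    (hα : ∀ w σ u (hu : u.length < n), α (w ++ [σ]) ⟨u, by omega⟩ = α w ⟨σ :: u, by simpa⟩)
    (w : List Sg) : α w = window (fun v => α v ⟨[], by simp⟩) w n := by
  funext ⟨u, hu⟩
  induction u generalizing w with
  | nil => simp [window]
  | cons σ u ih =>
    have hu' : u.length < n := by simpa using hu
    rw [← hα w σ u hu', ih (w ++ [σ]) (by omega), window_append_singleton _ _ _ _ hu']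

def Window.truncate {Sg C : Type} {n : ℕ} (p : Window Sg C n) (k : ℕ) (hk : k ≤ n) :
    TreeBlock Sg C :=
  ⟨k, fun m => p ⟨m.val, by have := m.2; omega⟩⟩

theorem avoids_eq_setOf_window_truncate {Sg C : Type} {F : Set (TreeBlock Sg C)} {n : ℕ}
    (hF : ∀ b ∈ F, b.1 ≤ n) :
    avoids F = {g | ∀ w k (hk : k ≤ n), (window g w n).truncate k hk ∉ F} := by
  ext g
  exact ⟨fun hg w k _ => hg w k, fun hg w k hmem => hg w k (hF _ hmem) hmem⟩

section ShiftOfFiniteType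

variable {Sg C : Type} [Finite Sg] [Finite C]

theorem isSFT_setOf_forall_window (n : ℕ) (P : Window Sg C n → Prop) :
    IsSFT {g : List Sg → C | ∀ w, P (window g w n)} := by
  refine ⟨(fun p => (⟨n, p⟩ : TreeBlock Sg C)) '' {p | ¬ P p}, (Set.toFinite _).image _, ?_⟩
  ext g
  constructor
  · rintro hg w k ⟨p, hp, hpk⟩
    obtain rfl : n = k := congrArg Sigma.fst hpk
    exact hp (sigma_mk_injective hpk ▸ hg w)
  · intro hg w
    by_contra hw
    exact hg w n ⟨_, hw, rfl⟩

theorem isSFT_setOf_forall_children (R : C → (Sg → C) → Prop) :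
    IsSFT {g : List Sg → C | ∀ w, R (g w) (fun σ => g (w ++ [σ]))} := by
  simpa [window] using
    isSFT_setOf_forall_window 1 (fun p => R (p ⟨[], by simp⟩) (fun σ => p ⟨[σ], by simp⟩))

end ShiftOfFiniteType

theorem IsSFT.isSofic_image_comp {Sg C A : Type} [Finite C] {Y : Set (List Sg → C)} (hY : IsSFT Y)
    (φ : C → A) : IsSofic ((fun g w => φ (g w)) '' Y) := by
  refine ⟨C, inferInstance, Y, fun g w => φ (g.val w), hY, ?_, Set.image_eq_range _ _⟩
  exact ⟨{[]}, fun v => φ (v ⟨[], Finset.mem_singleton_self _⟩), fun g w => by simp⟩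

namespace URA

variable {Sg A : Type}

def IsRun (𝒜 : URA Sg A) (g : List Sg → 𝒜.T) : Prop :=
  ∀ w, (fun σ => (g (w ++ [σ])).val.1) = (g w).val.2.2

theorem shift_eq_image_runs (𝒜 : URA Sg A) :
    𝒜.shift = (fun g w => (g w).val.2.1) '' {g | 𝒜.IsRun g} := by
  ext f
  constructor
  · rintro ⟨α, hα⟩
    exact ⟨fun w => ⟨_, hα w⟩, fun w => rfl, rfl⟩
  · rintro ⟨g, hg, rfl⟩
    refine ⟨fun w => (g w).val.1, fun w => ?_⟩
    simpa only [hg w] using (g w).property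

theorem isSofic_shift [Finite Sg] [Finite A] (𝒜 : URA Sg A) : IsSofic 𝒜.shift := by
  rw [shift_eq_image_runs]
  have hruns : IsSFT {g | 𝒜.IsRun g} :=
    isSFT_setOf_forall_children fun (t : 𝒜.T) s => (fun σ => (s σ).val.1) = t.val.2.2
  exact hruns.isSofic_image_comp fun t => t.val.2.1

end URA

section BlockAutomaton

variable {Sg C A : Type} [Finite Sg] [Finite C] [Nonempty C]

def blockAutomaton (n : ℕ) (P : Window Sg C n → Prop) (lab : Window Sg C n → A) : URA Sg A where
  S := Window Sg C n
  T := {t | P t.1 ∧ t.2.1 = lab t.1 ∧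
    ∀ σ u (hu : u.length < n), t.2.2 σ ⟨u, by omega⟩ = t.1 ⟨σ :: u, by simpa⟩}

theorem blockAutomaton_shift (n : ℕ) (P : Window Sg C n → Prop) (lab : Window Sg C n → A) :
    (blockAutomaton n P lab).shift =
      (fun g w => lab (window g w n)) '' {g | ∀ w, P (window g w n)} := by
  ext f
  constructor
  · rintro ⟨α, hα⟩
    have hαw := eq_window_of_shift_compatible (fun w => (hα w).2.2)
    refine ⟨fun v => α v ⟨[], by simp⟩, fun w => ?_, funext fun w => ?_⟩
    · rw [← hαw w]
      exact (hα w).1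
    · have hlab : f w = lab (α w) := (hα w).2.1
      rw [hlab, hαw w]
  · rintro ⟨g, hg, rfl⟩
    exact ⟨(window g · n), fun w => ⟨hg w, rfl, fun σ u hu => window_append_singleton g w σ u hu⟩⟩

end BlockAutomaton

theorem IsSofic.exists_eq_shift {Sg A : Type} [Finite Sg] {X : Set (List Sg → A)}
    (hX : IsSofic X) : ∃ 𝒜 : URA Sg A, X = 𝒜.shift := by
  obtain ⟨C, _, Y, τ, ⟨F, hF, rfl⟩, ⟨M, μ, hμ⟩, rfl⟩ := hX
  cases isEmpty_or_nonempty C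
  -- the states of `blockAutomaton` would not be inhabited, but then there is no configuration
  · have : IsEmpty (avoids F) := ⟨fun g => isEmptyElim (g.val [])⟩
    refine ⟨⟨Unit, ∅⟩, ?_⟩
    rw [Set.range_eq_empty, eq_comm, Set.eq_empty_iff_forall_notMem]
    rintro _ ⟨_, hα⟩
    exact hα []
  obtain ⟨n, hFn, hMn⟩ : ∃ n, (∀ b ∈ F, b.1 ≤ n) ∧ ∀ m ∈ M, m.length < n + 1 :=
    ⟨max (hF.toFinset.sup Sigma.fst) (M.sup List.length),
      fun b hb => le_max_of_le_left (Finset.le_sup (hF.mem_toFinset.mpr hb)),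
      fun m hm => Nat.lt_succ_of_le (le_max_of_le_right (Finset.le_sup hm))⟩
  refine ⟨blockAutomaton n
    (fun p => ∀ k (hk : k ≤ n), p.truncate k hk ∉ F)
    (fun p => μ fun m => p ⟨m.val, hMn m m.2⟩), ?_⟩
  rw [blockAutomaton_shift, ← avoids_eq_setOf_window_truncate hFn, Set.image_eq_range]
  exact congrArg Set.range (funext fun g => funext (hμ g))

theorem sofic_iff_accepted_general {Sg A : Type} [Finite Sg] [Finite A]
    (X : Set (List Sg → A)) :
    IsSofic X ↔ ∃ 𝒜 : URA Sg A, X = 𝒜.shift :=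
  ⟨IsSofic.exists_eq_shift, fun ⟨𝒜, h𝒜⟩ => h𝒜 ▸ 𝒜.isSofic_shift⟩

/-- a tree shift is sofic iff it is accepted by some unrestricted
Rabin automaton. -/
theorem sofic_iff_accepted {Sg A : Type} [Finite Sg] [Nonempty Sg] [Finite A]
    [TopologicalSpace A] [DiscreteTopology A]
    (X : Set (List Sg → A)) (hX : IsTreeShift X) :
    IsSofic X ↔ ∃ 𝒜 : URA Sg A, X = 𝒜.shift :=
  sofic_iff_accepted_general X
end

section
/- Let X ⊆ A^{Σ*} be a sofic tree shift. Then the set of regular configurations of X (configurations f ∈ X whose orbit {f^w : w ∈ Σ*} under the shift action is finite) is dense in X with respect to the prodiscrete topology. -/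
/-!
Write `X = τ(Y)` with `Y = X(F)` of finite type and `τ` a cellular automaton, and fix `f = τ(g)`.
Let `k` bound the sizes of the blocks in `F`. Below a depth `N`, rebuild `g` so that whenever
we move from a vertex to a child we first jump to a fixed representative of the `k`-ball
pattern seen so far. The result `h` agrees with `g` up to depth `N`, every `k`-ball pattern of
`h` occurs in `g` (so `h ∈ Y`), and below depth `N` the subtree of `h` at a vertex is determined
by one of finitely many `k`-ball patterns, so `h` is regular. Cellular automata commute with the
shift and have finite memory, so `τ(h)` is regular, lies in `X`, and agrees with `f` up to depth
`N` minus the memory radius.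
-/

section Regularization

variable {Sg C : Type} (g : List Sg → C) (k N : ℕ)

def ballPattern (w : List Sg) : {u : List Sg // u.length ≤ k} → C :=
  fun u => g (w ++ u.val)

noncomputable def ballRep (b : {u : List Sg // u.length ≤ k} → C) : List Sg :=
  Classical.epsilon fun r => ballPattern g k r = b

theorem ballPattern_ballRep (r : List Sg) :
    ballPattern g k (ballRep g k (ballPattern g k r)) = ballPattern g k r :=
  Classical.epsilon_spec (p := fun r' => ballPattern g k r' = ballPattern g k r) ⟨r, rfl⟩

noncomputable def rewireStep (r : List Sg) (σ : Sg) : List Sg :=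
  ballRep g k (ballPattern g k r) ++ [σ]

noncomputable def rewire (w : List Sg) : List Sg :=
  (w.drop N).foldl (rewireStep g k) (w.take N)

noncomputable def regularApprox : List Sg → C :=
  g ∘ rewire g k N

theorem rewire_of_length_le {w : List Sg} (hw : w.length ≤ N) : rewire g k N w = w := by
  simp [rewire, List.drop_eq_nil_of_le hw, List.take_of_length_le hw]

theorem rewire_append {w : List Sg} (hw : N ≤ w.length) (u : List Sg) :
    rewire g k N (w ++ u) = u.foldl (rewireStep g k) (rewire g k N w) := by
  simp only [rewire, List.take_append_of_le_length hw, List.drop_append_of_le_length hw,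
    List.foldl_append]

theorem exists_rewire_append_singleton (w : List Sg) (σ : Sg) :
    ∃ r, ballPattern g k r = ballPattern g k (rewire g k N w) ∧
      rewire g k N (w ++ [σ]) = r ++ [σ] := by
  by_cases hw : w.length < N
  · refine ⟨w, by rw [rewire_of_length_le g k N hw.le], rewire_of_length_le g k N ?_⟩
    simpa using hw
  · exact ⟨_, ballPattern_ballRep g k _, rewire_append g k N (not_lt.mp hw) [σ]⟩

theorem regularApprox_append (u : List Sg) (hu : u.length ≤ k) (w : List Sg) :
    regularApprox g k N (w ++ u) = g (rewire g k N w ++ u) := by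
  induction u generalizing w with
  | nil => simp [regularApprox]
  | cons σ u ih =>
    obtain ⟨r, hr, hrw⟩ := exists_rewire_append_singleton g k N w σ
    have hσu : (σ :: u).length ≤ k := hu
    calc regularApprox g k N (w ++ σ :: u)
        = g (rewire g k N (w ++ [σ]) ++ u) := by
          simpa using ih (Nat.le_of_succ_le hu) (w ++ [σ])
      _ = ballPattern g k r ⟨σ :: u, hσu⟩ := by simp [hrw, ballPattern]
      _ = g (rewire g k N w ++ σ :: u) := by rw [hr]; rfl

theorem blockAt_regularApprox {n : ℕ} (hn : n ≤ k) (w : List Sg) :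
    blockAt (regularApprox g k N) w n = blockAt g (rewire g k N w) n := by
  unfold blockAt
  congr 1
  funext u
  exact regularApprox_append g k N u.val (by omega) w

theorem regularApprox_of_length_le {w : List Sg} (hw : w.length ≤ N) :
    regularApprox g k N w = g w := by
  simp [regularApprox, rewire_of_length_le g k N hw]

theorem isRegularConfig_regularApprox [Finite Sg] [Finite C] :
    IsRegularConfig (regularApprox g k N) := by
  have : Finite {u : List Sg // u.length ≤ k} := (List.finite_length_le Sg k).to_subtype
  let tail (r : List Sg) : List Sg → C := fun u => g (u.foldl (rewireStep g k) r)
  have tail_ballRep (r : List Sg) : tail r = tail (ballRep g k (ballPattern g k r)) := by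
    have hr := ballPattern_ballRep g k r
    funext u
    cases u with
    | nil => simpa [tail, ballPattern] using (congrFun hr ⟨[], Nat.zero_le k⟩).symm
    | cons σ u => simp only [tail, List.foldl_cons, rewireStep, hr]
  have horbit : shiftOrbit (regularApprox g k N) ⊆
      shiftMap (regularApprox g k N) '' {w | w.length < N} ∪ Set.range (tail ∘ ballRep g k) := by
    rintro _ ⟨w, rfl⟩
    by_cases hw : w.length < N
    · exact Or.inl ⟨w, hw, rfl⟩
    · refine Or.inr ⟨ballPattern g k (rewire g k N w), ?_⟩
      rw [Function.comp_apply, ← tail_ballRep]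
      funext u
      simp only [tail, shiftMap, regularApprox, Function.comp_apply,
        rewire_append g k N (not_lt.mp hw)]
  exact (((List.finite_length_lt Sg N).image _).union (Set.finite_range _)).subset horbit

end Regularization

theorem IsSFT.exists_isRegularConfig_eqOn {Sg C : Type} [Finite Sg] [Finite C]
    {Y : Set (List Sg → C)} (hY : IsSFT Y) {g : List Sg → C} (hg : g ∈ Y) (N : ℕ) :
    ∃ h ∈ Y, IsRegularConfig h ∧ ∀ w : List Sg, w.length ≤ N → h w = g w := by
  obtain ⟨F, hF, rfl⟩ := hY
  obtain ⟨k, hk⟩ := (hF.image Sigma.fst).bddAbove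
  refine ⟨regularApprox g k N, fun w n hmem => ?_, isRegularConfig_regularApprox g k N,
    fun w => regularApprox_of_length_le g k N⟩
  have hn : n ≤ k := hk ⟨_, hmem, rfl⟩
  rw [blockAt_regularApprox g k N hn] at hmem
  exact hg _ n hmem

theorem IsCellularAutomaton.isRegularConfig_apply {Sg A B : Type} {X : Set (List Sg → A)}
    {τ : X → List Sg → B} (hτ : IsCellularAutomaton X τ) {f : X} (hf : IsRegularConfig f.val) :
    IsRegularConfig (τ f) := by
  obtain ⟨M, μ, hμ⟩ := hτ
  refine (hf.image fun g u => μ fun m => g (u ++ m.val)).subset ?_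
  rintro _ ⟨w, rfl⟩
  refine ⟨shiftMap f.val w, ⟨w, rfl⟩, funext fun u => ?_⟩
  simp [shiftMap, hμ]

theorem IsCellularAutomaton.exists_forall_eqOn {Sg A B : Type} {X : Set (List Sg → A)}
    {τ : X → List Sg → B} (hτ : IsCellularAutomaton X τ) :
    ∃ r : ℕ, ∀ (f f' : X) (N : ℕ), (∀ w : List Sg, w.length ≤ N + r → f.val w = f'.val w) →
      ∀ w : List Sg, w.length ≤ N → τ f w = τ f' w := by
  obtain ⟨M, μ, hμ⟩ := hτ
  refine ⟨M.sup List.length, fun f f' N hff' w hw => ?_⟩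
  rw [hμ, hμ]
  congr 1
  funext m
  apply hff'
  have := Finset.le_sup (f := List.length) m.property
  simp only [List.length_append]
  omega

theorem mem_closure_of_forall_exists_eqOn {Sg A : Type} [TopologicalSpace A]
    [DiscreteTopology A] {S : Set (List Sg → A)} {f : List Sg → A}
    (h : ∀ N : ℕ, ∃ f' ∈ S, ∀ w : List Sg, w.length ≤ N → f' w = f w) : f ∈ closure S := by
  rw [mem_closure_iff_nhds]
  intro U hU
  rw [nhds_pi] at hU
  obtain ⟨I, hI, V, hV, hIV⟩ := Filter.mem_pi.mp hU
  obtain ⟨N, hN⟩ := (hI.image List.length).bddAbove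
  obtain ⟨f', hf'S, hf'f⟩ := h N
  refine ⟨f', hIV fun w hw => ?_, hf'S⟩
  rw [hf'f w (hN ⟨w, hw, rfl⟩)]
  exact mem_of_mem_nhds (hV w)

theorem regular_dense_in_sofic_general {Sg A : Type} [Finite Sg]
    [TopologicalSpace A] [DiscreteTopology A]
    (X : Set (List Sg → A)) (hX : IsSofic X) :
    X ⊆ closure {f | f ∈ X ∧ IsRegularConfig f} := by
  obtain ⟨C, _, Y, τ, hY, hτ, rfl⟩ := hX
  obtain ⟨r, hr⟩ := hτ.exists_forall_eqOn
  rintro _ ⟨g, rfl⟩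
  refine mem_closure_of_forall_exists_eqOn fun N => ?_
  obtain ⟨h, hhY, hreg, hhg⟩ := hY.exists_isRegularConfig_eqOn g.property (N + r)
  exact ⟨τ ⟨h, hhY⟩, ⟨⟨_, rfl⟩, hτ.isRegularConfig_apply hreg⟩, hr _ _ N hhg⟩

/-- the regular configurations of a sofic tree shift `X` are
dense in `X`. -/
theorem regular_dense_in_sofic {Sg A : Type} [Finite Sg] [Nonempty Sg] [Finite A]
    [TopologicalSpace A] [DiscreteTopology A]
    (X : Set (List Sg → A)) (hX : IsSofic X) :
    X ⊆ closure {f | f ∈ X ∧ IsRegularConfig f} :=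
  regular_dense_in_sofic_general X hX
end

section
/- For every n ∈ ℕ, the set R_n(A^{Σ*}) of configurations f ∈ A^{Σ*} whose orbit {f^w : w ∈ Σ*} under the shift action has at most n elements is finite. -/
private lemma shiftMap_shiftMap {Sg A : Type} (f : List Sg → A) (w v : List Sg) :
    shiftMap (shiftMap f w) v = shiftMap f (w ++ v) := by
  funext w'; simp [shiftMap, List.append_assoc]

theorem finite_regular_of_bounded_orbit {Sg A : Type} [Finite Sg] [Nonempty Sg]
    [Finite A] (n : ℕ) :
    {f : List Sg → A | (shiftOrbit f).Finite ∧ (shiftOrbit f).ncard ≤ n}.Finite := by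
  classical
  apply Set.Finite.subset (Set.finite_range
    (fun p : (Fin (n+1) → Sg → Fin (n+1)) × Fin (n+1) × (Fin (n+1) → A) =>
      fun w : List Sg => p.2.2 (w.foldl p.1 p.2.1)))
  rintro f ⟨hfin, hcard⟩
  have hmem : ∀ w, shiftMap f w ∈ shiftOrbit f := fun w => ⟨w, rfl⟩
  haveI : Fintype (shiftOrbit f) := hfin.fintype
  haveI hne : Nonempty (shiftOrbit f) := ⟨⟨f, hmem []⟩⟩
  have hcard' : Fintype.card (shiftOrbit f) ≤ Fintype.card (Fin (n+1)) := by
    rw [Fintype.card_fin]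
    have := (Set.ncard_eq_toFinset_card' (shiftOrbit f)).symm
    have h2 : Fintype.card (shiftOrbit f) = (shiftOrbit f).ncard := by
      rw [Set.ncard_eq_toFinset_card', Set.toFinset_card]
    omega
  obtain ⟨e⟩ := Function.Embedding.nonempty_of_card_le hcard'
  -- step map on the orbit
  have hstep : ∀ (g : shiftOrbit f) (σ : Sg), shiftMap g.val [σ] ∈ shiftOrbit f := by
    rintro ⟨g, w, rfl⟩ σ
    rw [shiftMap_shiftMap]; exact hmem _
  set step : shiftOrbit f → Sg → shiftOrbit f := fun g σ => ⟨shiftMap g.val [σ], hstep g σ⟩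
  set inv : Fin (n+1) → shiftOrbit f := Function.invFun e
  refine ⟨⟨fun s σ => e (step (inv s) σ), e ⟨f, hmem []⟩, fun s => (inv s).val []⟩, ?_⟩
  have hinv : ∀ g : shiftOrbit f, inv (e g) = g :=
    Function.leftInverse_invFun e.injective
  have key : ∀ w : List Sg, w.foldl (fun s σ => e (step (inv s) σ)) (e ⟨f, hmem []⟩)
      = e ⟨shiftMap f w, hmem w⟩ := by
    intro w
    induction w using List.reverseRecOn with
    | nil => rfl
    | append_singleton w σ ih =>
        rw [List.foldl_append, List.foldl_cons, List.foldl_nil, ih, hinv]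
        congr 1
        apply Subtype.ext
        exact shiftMap_shiftMap f w [σ]
  funext w
  simp only [key, hinv]
  show shiftMap f w [] = f w
  simp [shiftMap]
end

section
/- Let X ⊆ A^{Σ*} be a tree shift and τ : X → B^{Σ*} a cellular automaton. If the set R(X) of regular configurations of X is dense in X, then the set R(τ(X)) of regular configurations of τ(X) is dense in τ(X). -/
/-- if the regular configurations of `X` are dense in `X`, then
the regular configurations of `τ(X)` are dense in `τ(X)`. -/
theorem regular_dense_image {Sg A B : Type} [Finite Sg] [Nonempty Sg]
    [Finite A] [Finite B] [TopologicalSpace A] [DiscreteTopology A]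
    [TopologicalSpace B] [DiscreteTopology B]
    (X : Set (List Sg → A)) (hX : IsTreeShift X)
    (τ : X → List Sg → B) (hτ : IsCellularAutomaton X τ)
    (hd : X ⊆ closure {f | f ∈ X ∧ IsRegularConfig f}) :
    Set.range τ ⊆ closure {g | g ∈ Set.range τ ∧ IsRegularConfig g} := by
  classical
  obtain ⟨M, μ, hμ⟩ := hτ
  -- τ of a regular configuration is regular
  have key : ∀ F : X, IsRegularConfig F.val → IsRegularConfig (τ F) := by
    intro F hF
    set Φ : (List Sg → A) → (List Sg → B) :=
      fun h => if hh : h ∈ X then τ ⟨h, hh⟩ else fun _ => τ F [] with hΦ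
    have hsub : shiftOrbit (τ F) ⊆ Φ '' shiftOrbit F.val := by
      rintro g ⟨w, rfl⟩
      refine ⟨shiftMap F.val w, ⟨w, rfl⟩, ?_⟩
      have hmem : shiftMap F.val w ∈ X := hX.2 F.val F.2 w
      rw [hΦ]
      simp only [hmem, dif_pos]
      funext w'
      rw [hμ, shiftMap, hμ]
      congr 1
      funext m
      simp [shiftMap, List.append_assoc]
    exact ((hF.image Φ).subset hsub)
  rintro g ⟨F, rfl⟩
  rw [mem_closure_iff_nhds]
  intro t ht
  rw [nhds_pi] at ht
  simp only [nhds_discrete] at ht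
  obtain ⟨I, hIfin, s, hs, hsub⟩ := Filter.mem_pi.mp ht
  -- the relevant coordinates of f
  set W : Set (List Sg) := (fun p : List Sg × List Sg => p.1 ++ p.2) '' (I ×ˢ (M : Set (List Sg)))
  have hWfin : W.Finite := (hIfin.prod M.finite_toSet).image _
  -- cylinder around F.val on W is a neighborhood of F.val
  have hcyl : W.pi (fun w => {F.val w}) ∈ nhds F.val := by
    rw [nhds_pi]
    simp only [nhds_discrete]
    exact Filter.mem_pi.mpr ⟨W, hWfin, fun w => {F.val w}, fun w => rfl, le_refl _⟩
  obtain ⟨f', hf't, hf'⟩ := mem_closure_iff_nhds.mp (hd F.2) _ hcyl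
  obtain ⟨hf'X, hf'reg⟩ := hf'
  refine ⟨τ ⟨f', hf'X⟩, ?_, ⟨⟨f', hf'X⟩, rfl⟩, key ⟨f', hf'X⟩ hf'reg⟩
  apply hsub
  intro w hw
  have : τ ⟨f', hf'X⟩ w = τ F w := by
    rw [hμ, hμ]
    congr 1
    funext m
    exact hf't (w ++ m.val) ⟨(w, m.val), ⟨hw, m.2⟩, rfl⟩
  rw [this]
  exact hs w
end

section
/- Let X be a topological space, let τ : X → X be a closed map, and let (X_i)_{i ∈ I} be a family of subsets of X such that X is the closure of ⋃_{i∈I} X_i, τ(X_i) ⊆ X_i for every i, and each restriction τ|_{X_i} : X_i → X_i is surjunctive (injective implies surjective). Then τ is surjunctive: if τ is injective then τ is surjective. -/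
/-- a closed self-map admitting a family of invariant subsets
with dense union on which it is surjunctive is surjunctive. -/
theorem surjunctive_of_dense_family {X : Type} [TopologicalSpace X]
    (τ : X → X) (hc : IsClosedMap τ) {I : Type} (Xi : I → Set X)
    (hU : closure (⋃ i, Xi i) = Set.univ)
    (hinv : ∀ i, τ '' Xi i ⊆ Xi i)
    (hsurj : ∀ i, Set.InjOn τ (Xi i) → Xi i ⊆ τ '' Xi i) :
    Function.Injective τ → Function.Surjective τ := by
  intro hinj
  have hr : IsClosed (Set.range τ) := by
    simpa [Set.image_univ] using hc Set.univ isClosed_univ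
  have hsub : (⋃ i, Xi i) ⊆ Set.range τ := by
    intro x hx
    rcases Set.mem_iUnion.1 hx with ⟨i, hxi⟩
    rcases hsurj i (hinj.injOn) hxi with ⟨y, _, hy⟩
    exact ⟨y, hy⟩
  have : (Set.univ : Set X) ⊆ Set.range τ := by
    rw [← hU]
    exact hr.closure_subset_iff.2 hsub
  intro x; exact this (Set.mem_univ x)
end

section
/- Let 𝒜 = (S, Σ, A, 𝒯) be an essential unrestricted Rabin automaton, let T ⊆ Σ* be a subtree, and suppose f : T → A is accepted by 𝒜, i.e. there is α : T → S such that for each w ∈ T the tuple (α(w); f(w); (α(wσ))_{σ∈Σ_T(w)}) is a sub-bundle of some transition bundle in 𝒯. Then there exists a configuration f̄ ∈ Sh_𝒜 with f̄|_T = f. -/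
/-- Auxiliary: run the automaton along a reversed word, choosing bundles. -/
def stAux {Sg A : Type} (𝒜 : URA Sg A)
    (bundle : List Sg → 𝒜.S → 𝒜.S × A × (Sg → 𝒜.S)) (s0 : 𝒜.S) :
    List Sg → 𝒜.S
  | [] => s0
  | σ :: r => (bundle r.reverse (stAux 𝒜 bundle s0 r)).2.2 σ

/-- a map on a subtree accepted by an essential unrestricted
Rabin automaton extends to a configuration in `Sh_𝒜`. -/
theorem accepted_subtree_extends {Sg A : Type} [Finite Sg] [Nonempty Sg]
    [Finite A] (𝒜 : URA Sg A) (hE : 𝒜.Essential)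
    (T : Set (List Sg)) (hT : IsSubtree T)
    (f : List Sg → A) (α : List Sg → 𝒜.S)
    (hacc : ∀ w ∈ T, ∃ t ∈ 𝒜.T, t.1 = α w ∧ t.2.1 = f w ∧
      ∀ σ : Sg, w ++ [σ] ∈ T → t.2.2 σ = α (w ++ [σ])) :
    ∃ fbar ∈ 𝒜.shift, ∀ w ∈ T, fbar w = f w := by
  classical
  set bundle : List Sg → 𝒜.S → 𝒜.S × A × (Sg → 𝒜.S) := fun w s =>
    if h : w ∈ T then (hacc w h).choose else (hE s).choose with hbundle
  have hbT : ∀ w (h : w ∈ T) (s : 𝒜.S), bundle w s ∈ 𝒜.T ∧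
      (bundle w s).1 = α w ∧ (bundle w s).2.1 = f w ∧
      ∀ σ : Sg, w ++ [σ] ∈ T → (bundle w s).2.2 σ = α (w ++ [σ]) := by
    intro w h s
    simp only [hbundle, dif_pos h]
    obtain ⟨ht, h1, h2, h3⟩ := (hacc w h).choose_spec
    exact ⟨ht, h1, h2, h3⟩
  have hbE : ∀ w (s : 𝒜.S), bundle w s ∈ 𝒜.T ∧ (bundle w s).1 = s ∨ w ∈ T := by
    intro w s
    by_cases h : w ∈ T
    · exact Or.inr h
    · left
      simp only [hbundle, dif_neg h]
      exact (hE s).choose_spec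
  set β : List Sg → 𝒜.S := fun w => stAux 𝒜 bundle (α []) w.reverse with hβ
  have hstep : ∀ (w : List Sg) (σ : Sg),
      β (w ++ [σ]) = (bundle w (β w)).2.2 σ := by
    intro w σ
    simp only [hβ, List.reverse_append, List.reverse_cons, List.reverse_nil,
      List.nil_append, List.cons_append, stAux, List.reverse_reverse]
  have hβT : ∀ r : List Sg, r.reverse ∈ T → stAux 𝒜 bundle (α []) r = α r.reverse := by
    intro r
    induction r with
    | nil => intro _; simp [stAux]
    | cons σ r ih =>
      intro h
      have hr : r.reverse ∈ T := by
        have := hT.2 r.reverse [σ]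
        simpa using this (by simpa using h)
      have hih := ih hr
      simp only [stAux, hih]
      have := (hbT r.reverse hr (α r.reverse)).2.2.2 σ (by simpa using h)
      simpa using this
  have hβT' : ∀ w ∈ T, β w = α w := by
    intro w hw
    have := hβT w.reverse (by simpa using hw)
    simpa using this
  refine ⟨fun w => (bundle w (β w)).2.1, ⟨β, ?_⟩, ?_⟩
  · intro w
    have hts : bundle w (β w) ∈ 𝒜.T ∧ (bundle w (β w)).1 = β w := by
      rcases hbE w (β w) with h | hw
      · exact h
      · obtain ⟨ht, h1, _, _⟩ := hbT w hw (β w)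
        exact ⟨ht, by rw [h1, hβT' w hw]⟩
    have hfun : (fun σ => β (w ++ [σ])) = (bundle w (β w)).2.2 := by
      funext σ; exact hstep w σ
    simp only [hfun]
    obtain ⟨ht, hs⟩ := hts
    revert ht hs
    generalize bundle w (β w) = t
    intro ht hs
    rw [← hs]
    exact ht
  · intro w hw
    exact (hbT w hw (β w)).2.2.1
end
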